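/- The two functions u₁(x) = e^{x/2}/√(e^{2x}-1) and u₂(x) = (e^{2x}+1)/(e^{x/2}√(e^{2x}-1)) both satisfy the equation -u''(x) + P(x)u(x) = 0 on (0,∞), where P(x) = (e^{4x}+10e^{2x}+1)/(4(e^{2x}-1)²), and they are linearly independent (their Wronskian is a nonzero constant). -/

import Mathlib

open Real Filter

noncomputable def P (x : ℝ) : ℝ :=
  (Real.exp (4*x) + 10 * Real.exp (2*x) + 1) / (4 * (Real.exp (2*x) - 1)^2)

noncomputable def u₁ (x : ℝ) : ℝ :=
  Real.exp (x/2) / Real.sqrt (Real.exp (2*x) - 1)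

noncomputable def u₂ (x : ℝ) : ℝ :=
  (Real.exp (2*x) + 1) / (Real.exp (x/2) * Real.sqrt (Real.exp (2*x) - 1))

/-! With `s = √(e^{2x} - 1)` one has `s' = e^{2x} / s`, so `u₁`, `u₂`, `P` and all the derivatives
involved are rational functions of `e^{x/2}`, `e^{2x}` and `s`. Substituting `e^{2x} = s² + 1` turns
each required identity into a rational identity in `e^{x/2}` and `s`; the Wronskian is `1`. -/

open Topology

theorem deriv_deriv_eq_of_eventually_hasDerivAt {𝕜 F : Type*} [NontriviallyNormedField 𝕜]
    [NormedAddCommGroup F] [NormedSpace 𝕜 F] {f f' : 𝕜 → F} {x : 𝕜} {a : F}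
    (hf : ∀ᶠ y in 𝓝 x, HasDerivAt f (f' y) y) (hf' : HasDerivAt f' a x) :
    deriv (deriv f) x = a :=
  (hf'.congr_of_eventuallyEq (hf.mono fun _ hy => hy.deriv)).deriv

theorem hasDerivAt_exp_const_mul (c x : ℝ) :
    HasDerivAt (fun y => exp (c * y)) (c * exp (c * x)) x := by
  simpa [mul_comm] using ((hasDerivAt_id x).const_mul c).exp

theorem hasDerivAt_exp_div_const (c x : ℝ) :
    HasDerivAt (fun y => exp (y / c)) (exp (x / c) / c) x := by
  simpa [div_eq_mul_inv] using ((hasDerivAt_id x).div_const c).exp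

theorem exp_four_mul (x : ℝ) : exp (4 * x) = exp (2 * x) ^ 2 := by
  rw [← exp_nat_mul]; ring_nf

variable {x : ℝ}

theorem one_lt_exp_two_mul (hx : 0 < x) : 1 < exp (2 * x) :=
  one_lt_exp_iff.mpr (by linarith)

theorem sqrt_exp_two_mul_sub_one_pos (hx : 0 < x) : 0 < √(exp (2 * x) - 1) :=
  sqrt_pos.mpr (by linarith [one_lt_exp_two_mul hx])

theorem exp_two_mul_eq_sq_sqrt (hx : 0 < x) : exp (2 * x) = √(exp (2 * x) - 1) ^ 2 + 1 := by
  rw [sq_sqrt (by linarith [one_lt_exp_two_mul hx])]; ring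

theorem hasDerivAt_sqrt_exp_two_mul_sub_one (hx : 0 < x) :
    HasDerivAt (fun y => √(exp (2 * y) - 1)) (exp (2 * x) / √(exp (2 * x) - 1)) x := by
  convert ((hasDerivAt_exp_const_mul 2 x).sub_const 1).sqrt
    (by linarith [one_lt_exp_two_mul hx]) using 1
  ring

noncomputable def u₁' (x : ℝ) : ℝ :=
  -(exp (x / 2) * (exp (2 * x) + 1)) / (2 * (exp (2 * x) - 1) * √(exp (2 * x) - 1))

noncomputable def u₂' (x : ℝ) : ℝ :=
  (exp (2 * x) ^ 2 - 6 * exp (2 * x) + 1) /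
    (2 * exp (x / 2) * (exp (2 * x) - 1) * √(exp (2 * x) - 1))

theorem hasDerivAt_u₁ (hx : 0 < x) : HasDerivAt u₁ (u₁' x) x := by
  refine ((hasDerivAt_exp_div_const 2 x).div (hasDerivAt_sqrt_exp_two_mul_sub_one hx)
    (sqrt_exp_two_mul_sub_one_pos hx).ne').congr_deriv ?_
  simp only [u₁']
  have ht := (sqrt_exp_two_mul_sub_one_pos hx).ne'
  have hE := exp_two_mul_eq_sq_sqrt hx
  generalize √(exp (2 * x) - 1) = t at ht hE ⊢
  rw [hE]
  field_simp
  ring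

theorem hasDerivAt_u₂ (hx : 0 < x) : HasDerivAt u₂ (u₂' x) x := by
  refine (((hasDerivAt_exp_const_mul 2 x).add_const 1).div
    ((hasDerivAt_exp_div_const 2 x).mul (hasDerivAt_sqrt_exp_two_mul_sub_one hx))
    (mul_ne_zero (exp_ne_zero _) (sqrt_exp_two_mul_sub_one_pos hx).ne')).congr_deriv ?_
  simp only [u₂', Pi.mul_apply]
  have ht := (sqrt_exp_two_mul_sub_one_pos hx).ne'
  have hE := exp_two_mul_eq_sq_sqrt hx
  generalize √(exp (2 * x) - 1) = t at ht hE ⊢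
  rw [hE]
  field_simp
  ring

theorem hasDerivAt_u₁' (hx : 0 < x) : HasDerivAt u₁' (P x * u₁ x) x := by
  have hexp := hasDerivAt_exp_const_mul 2 x
  have hden : 2 * (exp (2 * x) - 1) * √(exp (2 * x) - 1) ≠ 0 := by
    have := sqrt_exp_two_mul_sub_one_pos hx
    have := one_lt_exp_two_mul hx
    positivity
  refine (((hasDerivAt_exp_div_const 2 x).mul (hexp.add_const 1)).neg.div
    ((hexp.sub_const 1).const_mul 2 |>.mul (hasDerivAt_sqrt_exp_two_mul_sub_one hx))
    hden).congr_deriv ?_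
  simp only [P, u₁, exp_four_mul, Pi.mul_apply, Pi.neg_apply]
  have ht := (sqrt_exp_two_mul_sub_one_pos hx).ne'
  have hE := exp_two_mul_eq_sq_sqrt hx
  generalize √(exp (2 * x) - 1) = t at ht hE ⊢
  rw [hE]
  field_simp
  ring

theorem hasDerivAt_u₂' (hx : 0 < x) : HasDerivAt u₂' (P x * u₂ x) x := by
  have hexp := hasDerivAt_exp_const_mul 2 x
  have hden : 2 * exp (x / 2) * (exp (2 * x) - 1) * √(exp (2 * x) - 1) ≠ 0 := by
    have := sqrt_exp_two_mul_sub_one_pos hx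
    have := one_lt_exp_two_mul hx
    positivity
  refine ((((hexp.pow 2).sub (hexp.const_mul 6)).add_const 1).div
    ((((hasDerivAt_exp_div_const 2 x).const_mul 2).mul (hexp.sub_const 1)).mul
      (hasDerivAt_sqrt_exp_two_mul_sub_one hx)) hden).congr_deriv ?_
  simp only [P, u₂, exp_four_mul, Pi.mul_apply, Pi.sub_apply, Pi.pow_apply]
  have ht := (sqrt_exp_two_mul_sub_one_pos hx).ne'
  have hE := exp_two_mul_eq_sq_sqrt hx
  generalize √(exp (2 * x) - 1) = t at ht hE ⊢
  rw [hE]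
  field_simp
  ring

theorem u₁_mul_u₂'_sub_u₂_mul_u₁' (hx : 0 < x) : u₁ x * u₂' x - u₂ x * u₁' x = 1 := by
  simp only [u₁, u₂, u₁', u₂']
  have ht := (sqrt_exp_two_mul_sub_one_pos hx).ne'
  have hE := exp_two_mul_eq_sq_sqrt hx
  generalize √(exp (2 * x) - 1) = t at ht hE ⊢
  rw [hE]
  field_simp
  ring

theorem deriv_deriv_u₁ (hx : 0 < x) : deriv (deriv u₁) x = P x * u₁ x :=
  deriv_deriv_eq_of_eventually_hasDerivAt
    ((eventually_gt_nhds hx).mono fun _ hy => hasDerivAt_u₁ hy) (hasDerivAt_u₁' hx)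

theorem deriv_deriv_u₂ (hx : 0 < x) : deriv (deriv u₂) x = P x * u₂ x :=
  deriv_deriv_eq_of_eventually_hasDerivAt
    ((eventually_gt_nhds hx).mono fun _ hy => hasDerivAt_u₂ hy) (hasDerivAt_u₂' hx)

theorem stmt_7 :
    (∀ x : ℝ, 0 < x → -(deriv (deriv u₁) x) + P x * u₁ x = 0) ∧
    (∀ x : ℝ, 0 < x → -(deriv (deriv u₂) x) + P x * u₂ x = 0) ∧
    (∃ c : ℝ, c ≠ 0 ∧ ∀ x : ℝ, 0 < x →
      u₁ x * deriv u₂ x - u₂ x * deriv u₁ x = c) := by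
  refine ⟨fun x hx => by rw [deriv_deriv_u₁ hx, neg_add_cancel],
    fun x hx => by rw [deriv_deriv_u₂ hx, neg_add_cancel], 1, one_ne_zero, fun x hx => ?_⟩
  rw [(hasDerivAt_u₁ hx).deriv, (hasDerivAt_u₂ hx).deriv]
  exact u₁_mul_u₂'_sub_u₂_mul_u₁' hx
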